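/- Let (G,Γ₁,Γ₂) be a boundary triple for S, and let A, B be bounded linear operators on G with A B* = B A* and M^{A,B} boundedly invertible (a normalized pair), where M^{A,B}(x₁,x₂) = (A x₁ − B x₂, B x₁ + A x₂) on G ⊕ G. Then the operator H^{A,B} is self-adjoint, and for every z in the intersection of the resolvent sets of H⁰ and H^{A,B}, the operators Q(z)B* − A* and BQ(z) − A are boundedly invertible and (H^{A,B} − z)⁻¹ = (H⁰ − z)⁻¹ − γ(z) B* (Q(z) B* − A*)⁻¹ γ(z̄)* = (H⁰ − z)⁻¹ − γ(z) (B Q(z) − A)⁻¹ B γ(z̄)*, where γ(z̄)* : H → G is the adjoint of γ(z̄). -/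

import Mathlib

open ContinuousLinearMap

variable {H : Type*} [NormedAddCommGroup H] [InnerProductSpace ℂ H] [CompleteSpace H]
variable {G : Type*} [NormedAddCommGroup G] [InnerProductSpace ℂ G] [CompleteSpace G]

/-- The operator `M^{A,B}` on `G × G`, `(x₁,x₂) ↦ (A x₁ - B x₂, B x₁ + A x₂)`. -/
noncomputable def MAB (A B : G →L[ℂ] G) : (G × G) →L[ℂ] (G × G) :=
  ((A.comp (fst ℂ G G)) - (B.comp (snd ℂ G G))).prod
    ((B.comp (fst ℂ G G)) + (A.comp (snd ℂ G G)))

/-- A bounded operator is boundedly invertible if it has a bounded two-sided inverse. -/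
def IsBoundedlyInvertible {E F : Type*} [NormedAddCommGroup E] [NormedSpace ℂ E]
    [NormedAddCommGroup F] [NormedSpace ℂ F] (T : E →L[ℂ] F) : Prop :=
  ∃ T' : F →L[ℂ] E, (∀ x, T' (T x) = x) ∧ (∀ y, T (T' y) = y)

/-- A densely defined operator is symmetric if `⟪Sφ, ψ⟫ = ⟪φ, Sψ⟫` on its domain. -/
def IsSymmetricPMap (S : H →ₗ.[ℂ] H) : Prop :=
  ∀ φ ψ : S.domain, (inner ℂ (S φ) (ψ : H) : ℂ) = inner ℂ (φ : H) (S ψ)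

/-- A boundary triple `(G, Γ₁, Γ₂)` for a symmetric operator `S`: two boundary maps
on `dom S*` satisfying the abstract Green identity and joint surjectivity. -/
structure BoundaryTriple (S : H →ₗ.[ℂ] H) (G : Type*) [NormedAddCommGroup G]
    [InnerProductSpace ℂ G] [CompleteSpace G] where
  Γ₁ : S.adjoint.domain →ₗ[ℂ] G
  Γ₂ : S.adjoint.domain →ₗ[ℂ] G
  green : ∀ φ ψ : S.adjoint.domain,
    (inner ℂ (φ : H) (S.adjoint ψ) : ℂ) - inner ℂ (S.adjoint φ) (ψ : H)
      = (inner ℂ (Γ₁ φ) (Γ₂ ψ) : ℂ) - inner ℂ (Γ₂ φ) (Γ₁ ψ)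
  surj : Function.Surjective fun φ : S.adjoint.domain => (Γ₁ φ, Γ₂ φ)

/-- The restriction of a partially defined operator `T` to a submodule `K` of its domain. -/
noncomputable def pmapRestrict (T : H →ₗ.[ℂ] H) (K : Submodule ℂ T.domain) : H →ₗ.[ℂ] H where
  domain := K.map T.domain.subtype
  toFun := (T.toFun.comp K.subtype).comp
    (Submodule.equivMapOfInjective T.domain.subtype
      (Submodule.injective_subtype T.domain) K).symm.toLinearMap

/-- The distinguished extension `H⁰`: the restriction of `S*` to `ker Γ₁`. -/
noncomputable def H0 (S : H →ₗ.[ℂ] H) (BT : BoundaryTriple S G) : H →ₗ.[ℂ] H :=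
  pmapRestrict S.adjoint (LinearMap.ker BT.Γ₁)

/-- The extension `H^{A,B}`: the restriction of `S*` to `{φ : A Γ₁ φ = B Γ₂ φ}`. -/
noncomputable def HAB (S : H →ₗ.[ℂ] H) (BT : BoundaryTriple S G) (A B : G →L[ℂ] G) :
    H →ₗ.[ℂ] H :=
  pmapRestrict S.adjoint
    (LinearMap.ker ((A.toLinearMap.comp BT.Γ₁) - (B.toLinearMap.comp BT.Γ₂)))

/-- `R` is the resolvent of `T` at `z`: a bounded, everywhere defined two-sided inverse
of `T - z`. -/
def IsResolventOf (T : H →ₗ.[ℂ] H) (z : ℂ) (R : H →L[ℂ] H) : Prop :=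
  (∀ f : H, ∃ φ : T.domain, (φ : H) = R f ∧ T φ - z • (φ : H) = f) ∧
  (∀ φ : T.domain, R (T φ - z • (φ : H)) = φ)

/-- `z` is in the resolvent set of `T`. -/
def InResolventSet (T : H →ₗ.[ℂ] H) (z : ℂ) : Prop := ∃ R, IsResolventOf T z R

/-- `γz` is the `Γ`-field at `z`: the inverse of `Γ₁` restricted to the deficiency
space `N_z = ker (S* - z)`. -/
def IsGammaField (S : H →ₗ.[ℂ] H) (BT : BoundaryTriple S G) (z : ℂ) (γz : G →L[ℂ] H) : Prop :=
  (∀ ξ : G, ∃ φ : S.adjoint.domain, (φ : H) = γz ξ ∧ S.adjoint φ = z • (φ : H) ∧ BT.Γ₁ φ = ξ) ∧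
  (∀ φ : S.adjoint.domain, S.adjoint φ = z • (φ : H) → γz (BT.Γ₁ φ) = (φ : H))

/-- `Qz` is the `Q`-function (Weyl function) at `z`: `Qz = Γ₂ ∘ γz`. -/
def IsQFunction (S : H →ₗ.[ℂ] H) (BT : BoundaryTriple S G) (z : ℂ)
    (γz : G →L[ℂ] H) (Qz : G →L[ℂ] G) : Prop :=
  IsGammaField S BT z γz ∧
    ∀ φ : S.adjoint.domain, S.adjoint φ = z • (φ : H) → Qz (BT.Γ₁ φ) = BT.Γ₂ φ

/-! For a normalized pair, `A x = B y` holds exactly when `(x, y) = (B* u, A* u)` for some `u`.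
Since `A B* = B A*`, Green's identity then vanishes on the domain of `H^{A,B}`, so `H^{A,B}` is
symmetric; testing Green's identity against the vectors with boundary values `(B* u, A* u)` shows
that its adjoint satisfies the boundary condition as well, so `H^{A,B}` is self-adjoint.

For `f ∈ H` the difference `(H^{A,B} - z)⁻¹ f - (H⁰ - z)⁻¹ f` lies in `N_z`, hence equals `γ(z) ξ`,
and the boundary condition gives `(B Q(z) - A) ξ = -B Γ₂ (H⁰ - z)⁻¹ f = -B γ(z̄)* f`. The operator
`B Q(z) - A` is bijective because `z` lies in the resolvent set of `H^{A,B}`; the same holds at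
`z̄`, and `Q(z)* = Q(z̄)` turns this into the invertibility of `Q(z) B* - A*`. -/

set_option linter.unusedSectionVars false

local notation "⟪" x ", " y "⟫" => @inner ℂ _ _ x y

theorem inner_self_add_inner_self_eq_zero {𝕜 E : Type*} [RCLike 𝕜] [NormedAddCommGroup E]
    [InnerProductSpace 𝕜 E] {a b : E} (h : inner 𝕜 a a + inner 𝕜 b b = 0) : a = 0 ∧ b = 0 := by
  rw [inner_self_eq_norm_sq_to_K, inner_self_eq_norm_sq_to_K] at h
  have hnorm : ‖a‖ ^ 2 + ‖b‖ ^ 2 = 0 := by exact_mod_cast h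
  rw [add_eq_zero_iff_of_nonneg (by positivity) (by positivity)] at hnorm
  simpa using hnorm

theorem LinearPMap.map_sub_eq_smul_of_eq {R E : Type*} [Ring R] [AddCommGroup E] [Module R E]
    {T : E →ₗ.[R] E} {z : R} {φ ψ : T.domain} (h : T φ - z • (φ : E) = T ψ - z • (ψ : E)) :
    T (φ - ψ) = z • ((φ - ψ : T.domain) : E) := by
  rw [LinearPMap.map_sub, Submodule.coe_sub, smul_sub]
  exact sub_eq_sub_iff_sub_eq_sub.mp h

theorem isBoundedlyInvertible_of_bijective {E F : Type*} [NormedAddCommGroup E]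
    [NormedSpace ℂ E] [CompleteSpace E] [NormedAddCommGroup F] [NormedSpace ℂ F]
    [CompleteSpace F] {T : E →L[ℂ] F} (h : Function.Bijective T) : IsBoundedlyInvertible T :=
  let e := ContinuousLinearEquiv.ofBijective T (LinearMap.ker_eq_bot.mpr h.1)
    (LinearMap.range_eq_top.mpr h.2)
  ⟨e.symm, e.symm_apply_apply, e.apply_symm_apply⟩

theorem IsBoundedlyInvertible.adjoint {E F : Type*} [NormedAddCommGroup E]
    [InnerProductSpace ℂ E] [CompleteSpace E] [NormedAddCommGroup F] [InnerProductSpace ℂ F]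
    [CompleteSpace F] {T : E →L[ℂ] F} (h : IsBoundedlyInvertible T) :
    IsBoundedlyInvertible (adjoint T) := by
  obtain ⟨T', hT'T, hTT'⟩ := h
  refine ⟨ContinuousLinearMap.adjoint T', fun x => ext_inner_left ℂ fun v => ?_,
    fun y => ext_inner_left ℂ fun v => ?_⟩
  · rw [adjoint_inner_right, adjoint_inner_right, hTT']
  · rw [adjoint_inner_right, adjoint_inner_right, hT'T]

section pmapRestrict

variable {T : H →ₗ.[ℂ] H} {K : Submodule ℂ T.domain}

theorem coe_mem_pmapRestrict_domain {ψ : T.domain} (h : ψ ∈ K) :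
    (ψ : H) ∈ (pmapRestrict T K).domain :=
  Submodule.mem_map_of_mem h

theorem pmapRestrict_apply_coe {ψ : T.domain} (h : ψ ∈ K) :
    pmapRestrict T K ⟨ψ, coe_mem_pmapRestrict_domain h⟩ = T ψ := by
  have hψ : ((Submodule.equivMapOfInjective _ (Submodule.injective_subtype _) K).symm
      ⟨ψ, coe_mem_pmapRestrict_domain h⟩ : T.domain) = ψ :=
    Subtype.ext (Submodule.map_equivMapOfInjective_symm_apply T.domain.subtype
      (Submodule.injective_subtype _) K ⟨ψ, coe_mem_pmapRestrict_domain h⟩)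
  exact congrArg T hψ

theorem exists_of_pmapRestrict_domain (x : (pmapRestrict T K).domain) :
    ∃ ψ ∈ K, (ψ : H) = x ∧ T ψ = pmapRestrict T K x := by
  obtain ⟨ψ, hψ, hx⟩ := Submodule.mem_map.mp x.2
  obtain rfl : x = ⟨ψ, coe_mem_pmapRestrict_domain hψ⟩ := Subtype.ext hx.symm
  exact ⟨ψ, hψ, rfl, (pmapRestrict_apply_coe hψ).symm⟩

end pmapRestrict

theorem IsSelfAdjoint.isFormalAdjoint {T : H →ₗ.[ℂ] H} (hT : IsSelfAdjoint T) :
    T.IsFormalAdjoint T := by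
  have hTT : T.adjoint = T := hT
  intro x y
  rw [hTT.ge.2 (y := ⟨x, hTT.ge.1 x.2⟩) rfl]
  exact LinearPMap.adjoint_isFormalAdjoint hT.dense_domain _ y

theorem IsResolventOf.adjoint {T : H →ₗ.[ℂ] H} (hT : IsSelfAdjoint T) {z : ℂ}
    {R : H →L[ℂ] H} (hR : IsResolventOf T z R) :
    IsResolventOf T (starRingEnd ℂ z) (ContinuousLinearMap.adjoint R) := by
  have hTT : T.adjoint = T := hT
  constructor
  · intro f
    set g := ContinuousLinearMap.adjoint R f
    have hS : ∀ x : T.domain, ⟪f + starRingEnd ℂ z • g, (x : H)⟫ = ⟪g, T x⟫ := by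
      intro x
      have h := adjoint_inner_left R (T x - z • (x : H)) f
      rw [hR.2 x, inner_sub_right, inner_smul_right] at h
      rw [inner_add_left, inner_smul_left, Complex.conj_conj]
      linear_combination h.symm
    have hmem := LinearPMap.mem_adjoint_domain_of_exists _ ⟨_, hS⟩
    refine ⟨⟨_, hTT.le.1 hmem⟩, rfl, ?_⟩
    rw [hTT.ge.2 (y := ⟨_, hmem⟩) rfl, LinearPMap.adjoint_apply_eq hT.dense_domain _ hS]
    abel
  · intro φ
    refine ext_inner_left ℂ fun v => ?_
    obtain ⟨χ, hχ, hχv⟩ := hR.1 v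
    rw [adjoint_inner_right, ← hχ, inner_sub_right, inner_smul_right, ← hχv, inner_sub_left,
      inner_smul_left, hT.isFormalAdjoint χ φ]

section NormalizedPair

variable {A B : G →L[ℂ] G}

theorem MAB_apply (v : G × G) : MAB A B v = (A v.1 - B v.2, B v.1 + A v.2) := rfl

theorem exists_apply_sub_apply_eq (hM : IsBoundedlyInvertible (MAB A B)) (η : G) :
    ∃ x y : G, A x - B y = η := by
  obtain ⟨M', -, hMM'⟩ := hM
  exact ⟨(M' (η, 0)).1, (M' (η, 0)).2, congrArg Prod.fst (hMM' (η, 0))⟩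

/-- The adjoint of `M^{A,B}`, `(p, q) ↦ (A* p + B* q, -B* p + A* q)`, is onto. Since `G × G`
carries no inner product, it is built by hand from the Riesz representatives of
`(c, d) ↦ ⟪x, (M⁻¹ (c, d)).1⟫ + ⟪y, (M⁻¹ (c, d)).2⟫`. -/
theorem exists_adjoint_MAB_eq (hM : IsBoundedlyInvertible (MAB A B)) (x y : G) :
    ∃ p q : G, adjoint A p + adjoint B q = x ∧ -adjoint B p + adjoint A q = y := by
  obtain ⟨M', hM'M, -⟩ := hM
  let ℓ : G × G →L[ℂ] ℂ := (innerSL ℂ x ∘L fst ℂ G G + innerSL ℂ y ∘L snd ℂ G G) ∘L M'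
  let p := (InnerProductSpace.toDual ℂ G).symm (ℓ ∘L inl ℂ G G)
  let q := (InnerProductSpace.toDual ℂ G).symm (ℓ ∘L inr ℂ G G)
  have hℓ : ∀ a b : G, ⟪x, a⟫ + ⟪y, b⟫ = ⟪p, A a - B b⟫ + ⟪q, B a + A b⟫ := by
    intro a b
    have hpq : ∀ c d : G, ℓ (c, d) = ⟪p, c⟫ + ⟪q, d⟫ := by
      intro c d
      rw [InnerProductSpace.toDual_symm_apply, InnerProductSpace.toDual_symm_apply]
      show ℓ (c, d) = ℓ (c, 0) + ℓ (0, d)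
      rw [← map_add, Prod.mk_add_mk, add_zero, zero_add]
    calc ⟪x, a⟫ + ⟪y, b⟫ = ℓ (MAB A B (a, b)) := by simp only [ℓ, comp_apply, hM'M]; rfl
      _ = _ := hpq _ _
  refine ⟨p, q, ext_inner_right ℂ fun a => ?_, ext_inner_right ℂ fun b => ?_⟩
  · rw [inner_add_left, adjoint_inner_left, adjoint_inner_left]
    simpa using (hℓ a 0).symm
  · rw [inner_add_left, inner_neg_left, adjoint_inner_left, adjoint_inner_left]
    simpa [inner_sub_right] using (hℓ 0 b).symm

theorem exists_adjoint_eq_of_apply_eq (hAB : A ∘L adjoint B = B ∘L adjoint A)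
    (hM : IsBoundedlyInvertible (MAB A B)) {x y : G} (h : A x = B y) :
    ∃ u, x = adjoint B u ∧ y = adjoint A u := by
  obtain ⟨p, q, rfl, rfl⟩ := exists_adjoint_MAB_eq hM x y
  have hq : A (adjoint B q) = B (adjoint A q) := DFunLike.congr_fun hAB q
  have hp : A (adjoint A p) + B (adjoint B p) = 0 :=
    calc A (adjoint A p) + B (adjoint B p)
        = A (adjoint A p + adjoint B q) - B (-adjoint B p + adjoint A q) := by
          rw [map_add, map_add, map_neg, hq]; abel
      _ = 0 := sub_eq_zero.mpr h
  have hp0 : adjoint A p = 0 ∧ adjoint B p = 0 := inner_self_add_inner_self_eq_zero <| by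
    rw [adjoint_inner_left, adjoint_inner_left, ← inner_add_right, hp, inner_zero_right]
  exact ⟨q, by rw [hp0.1, zero_add], by rw [hp0.2, neg_zero, zero_add]⟩

theorem inner_eq_inner_of_apply_eq (hAB : A ∘L adjoint B = B ∘L adjoint A)
    (hM : IsBoundedlyInvertible (MAB A B)) {x₁ y₁ x₂ y₂ : G} (h₁ : A x₁ = B y₁)
    (h₂ : A x₂ = B y₂) : ⟪x₁, y₂⟫ = ⟪y₁, x₂⟫ := by
  obtain ⟨u, rfl, rfl⟩ := exists_adjoint_eq_of_apply_eq hAB hM h₁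
  obtain ⟨v, rfl, rfl⟩ := exists_adjoint_eq_of_apply_eq hAB hM h₂
  rw [adjoint_inner_right, adjoint_inner_right]
  exact congrArg (⟪·, v⟫) (DFunLike.congr_fun hAB u)

end NormalizedPair

theorem IsSymmetricPMap.le_adjoint {S : H →ₗ.[ℂ] H} (hdense : Dense (S.domain : Set H))
    (hsymm : IsSymmetricPMap S) : S ≤ S.adjoint :=
  LinearPMap.IsFormalAdjoint.le_adjoint hdense hsymm

namespace BoundaryTriple

variable {S : H →ₗ.[ℂ] H} (BT : BoundaryTriple S G)

theorem exists_boundary_values (x y : G) : ∃ φ, BT.Γ₁ φ = x ∧ BT.Γ₂ φ = y := by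
  obtain ⟨φ, hφ⟩ := BT.surj (x, y)
  exact ⟨φ, congrArg Prod.fst hφ, congrArg Prod.snd hφ⟩

theorem boundary_values_eq_zero_of_forall_inner_eq {φ : S.adjoint.domain}
    (h : ∀ ψ : S.adjoint.domain, ⟪(φ : H), S.adjoint ψ⟫ = ⟪S.adjoint φ, (ψ : H)⟫) :
    BT.Γ₁ φ = 0 ∧ BT.Γ₂ φ = 0 := by
  obtain ⟨ψ, h₁, h₂⟩ := BT.exists_boundary_values (-BT.Γ₂ φ) (BT.Γ₁ φ)
  have hg := BT.green φ ψ
  rw [h ψ, sub_self, h₁, h₂, inner_neg_right, sub_neg_eq_add] at hg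
  exact inner_self_add_inner_self_eq_zero hg.symm

theorem exists_lift_of_mem_domain (hdense : Dense (S.domain : Set H))
    (hsymm : IsSymmetricPMap S) (x : S.domain) :
    ∃ φ : S.adjoint.domain, (φ : H) = x ∧ S.adjoint φ = S x ∧ BT.Γ₁ φ = 0 ∧ BT.Γ₂ φ = 0 := by
  have hle := hsymm.le_adjoint hdense
  have hSx : S.adjoint ⟨x, hle.1 x.2⟩ = S x := (hle.2 rfl).symm
  refine ⟨⟨x, hle.1 x.2⟩, rfl, hSx, BT.boundary_values_eq_zero_of_forall_inner_eq fun ψ => ?_⟩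
  rw [hSx]
  exact ((LinearPMap.adjoint_isFormalAdjoint hdense).symm x ψ).symm

end BoundaryTriple

section HAB

variable {S : H →ₗ.[ℂ] H} {BT : BoundaryTriple S G} {A B : G →L[ℂ] G} {z : ℂ}

theorem mem_ker_boundary_condition_iff {φ : S.adjoint.domain} :
    φ ∈ LinearMap.ker (A.toLinearMap.comp BT.Γ₁ - B.toLinearMap.comp BT.Γ₂) ↔
      A (BT.Γ₁ φ) = B (BT.Γ₂ φ) := by
  rw [LinearMap.mem_ker, LinearMap.sub_apply, sub_eq_zero]
  rfl

theorem coe_mem_HAB_domain {φ : S.adjoint.domain} (hφ : A (BT.Γ₁ φ) = B (BT.Γ₂ φ)) :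
    (φ : H) ∈ (HAB S BT A B).domain :=
  coe_mem_pmapRestrict_domain (mem_ker_boundary_condition_iff.mpr hφ)

theorem HAB_apply_coe {φ : S.adjoint.domain} (hφ : A (BT.Γ₁ φ) = B (BT.Γ₂ φ)) :
    HAB S BT A B ⟨φ, coe_mem_HAB_domain hφ⟩ = S.adjoint φ :=
  pmapRestrict_apply_coe (mem_ker_boundary_condition_iff.mpr hφ)

theorem exists_of_HAB_domain (x : (HAB S BT A B).domain) :
    ∃ φ : S.adjoint.domain, A (BT.Γ₁ φ) = B (BT.Γ₂ φ) ∧ (φ : H) = x ∧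
      S.adjoint φ = HAB S BT A B x := by
  obtain ⟨φ, hφ, hx, happ⟩ := exists_of_pmapRestrict_domain x
  exact ⟨φ, mem_ker_boundary_condition_iff.mp hφ, hx, happ⟩

theorem H0_eq_HAB : H0 S BT = HAB S BT 1 0 := by
  unfold H0 HAB
  congr 1
  ext φ
  simp

theorem dense_HAB_domain (hdense : Dense (S.domain : Set H)) (hsymm : IsSymmetricPMap S) :
    Dense ((HAB S BT A B).domain : Set H) := by
  refine hdense.mono fun x hx => ?_
  obtain ⟨φ, rfl, -, h₁, h₂⟩ := BT.exists_lift_of_mem_domain hdense hsymm ⟨x, hx⟩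
  exact coe_mem_HAB_domain (by rw [h₁, h₂, map_zero, map_zero])

theorem inner_adjoint_eq_of_boundary_condition (hAB : A ∘L adjoint B = B ∘L adjoint A)
    (hM : IsBoundedlyInvertible (MAB A B)) {φ ψ : S.adjoint.domain}
    (hφ : A (BT.Γ₁ φ) = B (BT.Γ₂ φ)) (hψ : A (BT.Γ₁ ψ) = B (BT.Γ₂ ψ)) :
    ⟪(φ : H), S.adjoint ψ⟫ = ⟪S.adjoint φ, (ψ : H)⟫ := by
  have hg := BT.green φ ψ
  rwa [inner_eq_inner_of_apply_eq hAB hM hφ hψ, sub_self, sub_eq_zero] at hg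

theorem HAB_isFormalAdjoint (hAB : A ∘L adjoint B = B ∘L adjoint A)
    (hM : IsBoundedlyInvertible (MAB A B)) :
    (HAB S BT A B).IsFormalAdjoint (HAB S BT A B) := by
  intro x y
  obtain ⟨φ, hφ, hφx, hφx'⟩ := exists_of_HAB_domain x
  obtain ⟨ψ, hψ, hψy, hψy'⟩ := exists_of_HAB_domain y
  rw [← hφx, ← hφx', ← hψy, ← hψy']
  exact (inner_adjoint_eq_of_boundary_condition hAB hM hφ hψ).symm

theorem HAB_adjoint_domain_le (hdense : Dense (S.domain : Set H)) (hsymm : IsSymmetricPMap S)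
    (hAB : A ∘L adjoint B = B ∘L adjoint A) :
    (HAB S BT A B).adjoint.domain ≤ (HAB S BT A B).domain := by
  intro g hg
  have hd : Dense ((HAB S BT A B).domain : Set H) := dense_HAB_domain hdense hsymm
  set h := (HAB S BT A B).adjoint ⟨g, hg⟩
  have hgh : ∀ ψ : S.adjoint.domain, A (BT.Γ₁ ψ) = B (BT.Γ₂ ψ) →
      ⟪g, S.adjoint ψ⟫ = ⟪h, (ψ : H)⟫ := fun ψ hψ => by
    rw [← HAB_apply_coe hψ]
    exact (LinearPMap.adjoint_isFormalAdjoint hd ⟨g, hg⟩ ⟨ψ, coe_mem_HAB_domain hψ⟩).symm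
  have hS : ∀ x : S.domain, ⟪h, (x : H)⟫ = ⟪g, S x⟫ := fun x => by
    obtain ⟨φ, hφx, hφS, h₁, h₂⟩ := BT.exists_lift_of_mem_domain hdense hsymm x
    rw [← hφx, ← hφS]
    exact (hgh φ (by rw [h₁, h₂, map_zero, map_zero])).symm
  let φ : S.adjoint.domain := ⟨g, LinearPMap.mem_adjoint_domain_of_exists _ ⟨h, hS⟩⟩
  have hφ : S.adjoint φ = h := LinearPMap.adjoint_apply_eq hdense _ hS
  -- test the boundary condition against the `ψ` with boundary values `(B* u, A* u)`
  suffices A (BT.Γ₁ φ) = B (BT.Γ₂ φ) from coe_mem_HAB_domain this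
  refine ext_inner_right ℂ fun u => ?_
  obtain ⟨ψ, h₁, h₂⟩ := BT.exists_boundary_values (adjoint B u) (adjoint A u)
  have hψ : A (BT.Γ₁ ψ) = B (BT.Γ₂ ψ) := by rw [h₁, h₂]; exact DFunLike.congr_fun hAB u
  have hg := BT.green φ ψ
  rw [hgh ψ hψ, hφ, sub_self, h₁, h₂, adjoint_inner_right, adjoint_inner_right] at hg
  exact sub_eq_zero.mp hg.symm

theorem HAB_isSelfAdjoint (hdense : Dense (S.domain : Set H)) (hsymm : IsSymmetricPMap S)
    (hAB : A ∘L adjoint B = B ∘L adjoint A) (hM : IsBoundedlyInvertible (MAB A B)) :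
    IsSelfAdjoint (HAB S BT A B) := by
  have hd : Dense ((HAB S BT A B).domain : Set H) := dense_HAB_domain hdense hsymm
  have hle := (HAB_isFormalAdjoint (BT := BT) hAB hM).le_adjoint hd
  exact (LinearPMap.eq_of_le_of_domain_eq hle
    (le_antisymm hle.1 (HAB_adjoint_domain_le hdense hsymm hAB))).symm

theorem IsResolventOf.exists_adjoint_domain {R : H →L[ℂ] H}
    (hR : IsResolventOf (HAB S BT A B) z R) (f : H) :
    ∃ φ : S.adjoint.domain, A (BT.Γ₁ φ) = B (BT.Γ₂ φ) ∧ (φ : H) = R f ∧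
      S.adjoint φ - z • (φ : H) = f := by
  obtain ⟨x, hxR, hxf⟩ := hR.1 f
  obtain ⟨φ, hφ, hφx, hφx'⟩ := exists_of_HAB_domain x
  exact ⟨φ, hφ, hφx.trans hxR, by rw [hφx', hφx, hxf]⟩

theorem IsResolventOf.apply_adjoint_sub_smul {R : H →L[ℂ] H}
    (hR : IsResolventOf (HAB S BT A B) z R) {φ : S.adjoint.domain}
    (hφ : A (BT.Γ₁ φ) = B (BT.Γ₂ φ)) : R (S.adjoint φ - z • (φ : H)) = φ := by
  simpa only [HAB_apply_coe hφ] using hR.2 ⟨φ, coe_mem_HAB_domain hφ⟩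

theorem IsGammaField.adjoint_apply {γ : G →L[ℂ] H} (hγ : IsGammaField S BT (starRingEnd ℂ z) γ)
    {φ : S.adjoint.domain} (hφ : BT.Γ₁ φ = 0) :
    adjoint γ (S.adjoint φ - z • (φ : H)) = BT.Γ₂ φ := by
  refine ext_inner_left ℂ fun ξ => ?_
  obtain ⟨ψ, hψγ, hψ, hψξ⟩ := hγ.1 ξ
  have hg := BT.green ψ φ
  rw [hφ, inner_zero_right, hψξ, hψ, inner_smul_left, Complex.conj_conj, sub_zero] at hg
  rw [adjoint_inner_right, ← hψγ, inner_sub_right, inner_smul_right, hg]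

theorem IsQFunction.adjoint {γz γzbar : G →L[ℂ] H} {Qz : G →L[ℂ] G}
    (hQ : IsQFunction S BT z γz Qz) (hγ : IsGammaField S BT (starRingEnd ℂ z) γzbar) :
    IsQFunction S BT (starRingEnd ℂ z) γzbar (ContinuousLinearMap.adjoint Qz) := by
  refine ⟨hγ, fun φ hφ => ext_inner_left ℂ fun ξ => ?_⟩
  obtain ⟨ψ, -, hψ, hψξ⟩ := hQ.1.1 ξ
  have hg := BT.green ψ φ
  rw [hφ, hψ, inner_smul_right, inner_smul_left, sub_self, hψξ, ← hQ.2 ψ hψ, hψξ] at hg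
  rw [adjoint_inner_right]
  exact (sub_eq_zero.mp hg.symm).symm

theorem IsQFunction.bijective_sub (hM : IsBoundedlyInvertible (MAB A B)) {γ : G →L[ℂ] H}
    {Q : G →L[ℂ] G} {R : H →L[ℂ] H} (hQ : IsQFunction S BT z γ Q)
    (hR : IsResolventOf (HAB S BT A B) z R) :
    Function.Bijective (B ∘L Q - A) := by
  refine ⟨(injective_iff_map_eq_zero _).mpr fun ξ hξ => ?_, fun η => ?_⟩
  · obtain ⟨φ, -, hφ, rfl⟩ := hQ.1.1 ξ
    have hbc : A (BT.Γ₁ φ) = B (BT.Γ₂ φ) := by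
      rw [← hQ.2 φ hφ]
      exact (sub_eq_zero.mp hξ).symm
    have h0 := hR.apply_adjoint_sub_smul hbc
    rw [hφ, sub_self, map_zero] at h0
    rw [show φ = 0 from Subtype.ext h0.symm, map_zero]
  · -- correct a `χ` with `B Γ₂ χ - A Γ₁ χ = η` by the solution of the boundary problem with
    -- the same `(S* - z) χ`; the difference lies in `N_z`
    obtain ⟨x, y, hxy⟩ := exists_apply_sub_apply_eq hM (-η)
    obtain ⟨χ, h₁, h₂⟩ := BT.exists_boundary_values x y
    obtain ⟨φ, hbc, -, hφ⟩ := hR.exists_adjoint_domain (S.adjoint χ - z • (χ : H))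
    refine ⟨BT.Γ₁ (χ - φ), ?_⟩
    rw [sub_apply, comp_apply, hQ.2 _ (LinearPMap.map_sub_eq_smul_of_eq hφ.symm), map_sub,
      map_sub, map_sub, map_sub, h₁, h₂, hbc, ← neg_neg η, ← hxy]
    abel

theorem exists_resolvent_HAB_eq_resolvent_H0_add {R0 RAB : H →L[ℂ] H} {γz γzbar : G →L[ℂ] H}
    {Qz : G →L[ℂ] G} (hR0 : IsResolventOf (H0 S BT) z R0)
    (hRAB : IsResolventOf (HAB S BT A B) z RAB)
    (hγ : IsGammaField S BT (starRingEnd ℂ z) γzbar) (hQ : IsQFunction S BT z γz Qz) (f : H) :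
    ∃ ξ : G, RAB f = R0 f + γz ξ ∧ (B ∘L Qz - A) ξ = -B (adjoint γzbar f) := by
  rw [H0_eq_HAB] at hR0
  obtain ⟨φ₀, hφ₀, hφ₀R, hφ₀f⟩ := hR0.exists_adjoint_domain f
  obtain ⟨φ, hφ, hφR, hφf⟩ := hRAB.exists_adjoint_domain f
  replace hφ₀ : BT.Γ₁ φ₀ = 0 := by simpa using hφ₀
  have hN := LinearPMap.map_sub_eq_smul_of_eq (hφf.trans hφ₀f.symm)
  refine ⟨BT.Γ₁ (φ - φ₀), ?_, ?_⟩
  · rw [hQ.1.2 _ hN, Submodule.coe_sub, ← hφR, ← hφ₀R]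
    abel
  · rw [sub_apply, comp_apply, hQ.2 _ hN, map_sub, map_sub, map_sub, map_sub, hφ₀, map_zero,
      sub_zero, hφ, ← hγ.adjoint_apply hφ₀, hφ₀f]
    abel

end HAB

theorem krein_resolvent_formula_normalized_general (S : H →ₗ.[ℂ] H)
    (hdense : Dense (S.domain : Set H)) (hsymm : IsSymmetricPMap S)
    (BT : BoundaryTriple S G) (A B : G →L[ℂ] G)
    (hAB : A ∘L adjoint B = B ∘L adjoint A) (hM : IsBoundedlyInvertible (MAB A B)) :
    _root_.IsSelfAdjoint (HAB S BT A B) ∧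
    ∀ z : ℂ, InResolventSet (H0 S BT) z → InResolventSet (HAB S BT A B) z →
      ∀ (γz γzbar : G →L[ℂ] H) (Qz : G →L[ℂ] G),
        IsGammaField S BT (starRingEnd ℂ z) γzbar → IsQFunction S BT z γz Qz →
        IsBoundedlyInvertible (Qz ∘L adjoint B - adjoint A) ∧
        IsBoundedlyInvertible (B ∘L Qz - A) ∧
        ∀ R0 RAB : H →L[ℂ] H,
          IsResolventOf (H0 S BT) z R0 → IsResolventOf (HAB S BT A B) z RAB →
          (∀ T' : G →L[ℂ] G,
            (∀ x, T' ((Qz ∘L adjoint B - adjoint A) x) = x) →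
            (∀ y, (Qz ∘L adjoint B - adjoint A) (T' y) = y) →
            RAB = R0 - γz ∘L adjoint B ∘L T' ∘L adjoint γzbar) ∧
          (∀ T' : G →L[ℂ] G,
            (∀ x, T' ((B ∘L Qz - A) x) = x) →
            (∀ y, (B ∘L Qz - A) (T' y) = y) →
            RAB = R0 - γz ∘L T' ∘L B ∘L adjoint γzbar) := by
  have hsa : IsSelfAdjoint (HAB S BT A B) := HAB_isSelfAdjoint hdense hsymm hAB hM
  refine ⟨hsa, fun z _ ⟨R, hR⟩ γz γzbar Qz hγ hQ => ?_⟩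
  have hbij := hQ.bijective_sub hM hR
  have hinv : IsBoundedlyInvertible (Qz ∘L adjoint B - adjoint A) := by
    have h := (isBoundedlyInvertible_of_bijective
      ((hQ.adjoint hγ).bijective_sub hM (hR.adjoint hsa))).adjoint
    rwa [map_sub, adjoint_comp, adjoint_adjoint] at h
  refine ⟨hinv, isBoundedlyInvertible_of_bijective hbij, fun R0 RAB hR0 hRAB => ⟨?_, ?_⟩⟩
  · intro T' _ hT'
    have hintertwine : (B ∘L Qz - A) ∘L adjoint B = B ∘L (Qz ∘L adjoint B - adjoint A) := by
      rw [sub_comp, comp_sub, ← hAB]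
      rfl
    ext f
    obtain ⟨ξ, hRf, hξ⟩ := exists_resolvent_HAB_eq_resolvent_H0_add hR0 hRAB hγ hQ f
    obtain rfl : ξ = -adjoint B (T' (adjoint γzbar f)) := hbij.1 <| by
      rw [hξ, map_neg, ← comp_apply _ (adjoint B), hintertwine, comp_apply, hT']
    rw [hRf, map_neg]
    simp only [sub_apply, comp_apply]
    abel
  · intro T' hT' _
    ext f
    obtain ⟨ξ, hRf, hξ⟩ := exists_resolvent_HAB_eq_resolvent_H0_add hR0 hRAB hγ hQ f
    obtain rfl : ξ = -T' (B (adjoint γzbar f)) := by rw [← map_neg, ← hξ, hT']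
    rw [hRf, map_neg]
    simp only [sub_apply, comp_apply]
    abel

/-- Krein's resolvent formula, normalized parameters. For a normalized
pair `(A,B)`, the operator `H^{A,B}` is self-adjoint, and for `z` in the intersection of
the resolvent sets of `H⁰` and `H^{A,B}` the operators `Q(z)B* − A*` and `BQ(z) − A` are
boundedly invertible and
`(H^{A,B} − z)⁻¹ = (H⁰ − z)⁻¹ − γ(z) B* (Q(z)B* − A*)⁻¹ γ(z̄)*
                 = (H⁰ − z)⁻¹ − γ(z) (BQ(z) − A)⁻¹ B γ(z̄)*`. -/
theorem krein_resolvent_formula_normalized (S : H →ₗ.[ℂ] H)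
    (hdense : Dense (S.domain : Set H)) (hclosed : S.IsClosed) (hsymm : IsSymmetricPMap S)
    (BT : BoundaryTriple S G) (A B : G →L[ℂ] G)
    (hAB : A ∘L adjoint B = B ∘L adjoint A) (hM : IsBoundedlyInvertible (MAB A B)) :
    _root_.IsSelfAdjoint (HAB S BT A B) ∧
    ∀ z : ℂ, InResolventSet (H0 S BT) z → InResolventSet (HAB S BT A B) z →
      ∀ (γz γzbar : G →L[ℂ] H) (Qz : G →L[ℂ] G),
        IsGammaField S BT (starRingEnd ℂ z) γzbar → IsQFunction S BT z γz Qz →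
        IsBoundedlyInvertible (Qz ∘L adjoint B - adjoint A) ∧
        IsBoundedlyInvertible (B ∘L Qz - A) ∧
        ∀ R0 RAB : H →L[ℂ] H,
          IsResolventOf (H0 S BT) z R0 → IsResolventOf (HAB S BT A B) z RAB →
          (∀ T' : G →L[ℂ] G,
            (∀ x, T' ((Qz ∘L adjoint B - adjoint A) x) = x) →
            (∀ y, (Qz ∘L adjoint B - adjoint A) (T' y) = y) →
            RAB = R0 - γz ∘L adjoint B ∘L T' ∘L adjoint γzbar) ∧
          (∀ T' : G →L[ℂ] G,
            (∀ x, T' ((B ∘L Qz - A) x) = x) →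
            (∀ y, (B ∘L Qz - A) (T' y) = y) →
            RAB = R0 - γz ∘L T' ∘L B ∘L adjoint γzbar) :=
  krein_resolvent_formula_normalized_general S hdense hsymm BT A B hAB hM
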